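/- Let W ≥ 1 be a real number, let d be a natural number, and define G(t) = T_d(2t/W + 1). Then G(t) ∈ [−1, 1] for all t ∈ [−W, 0], and if additionally d ≥ √W, then G(t) ≥ 2 for all t ≥ 1. -/

import Mathlib

/-!
On `[-1, 1]` the bound is `T_d (cos θ) = cos (d θ)`. For `x = cosh s ≥ 1` we have
`T_d x - 1 = cosh (d s) - 1 = 2 sinh² (d s / 2)`, and superadditivity of `sinh` on `[0, ∞)` gives
`T_d x ≥ 1 + d² (x - 1)`. At `x = 2t/W + 1` with `t ≥ 1` and `d² ≥ W` this is at least `3`.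
-/

open Real Polynomial.Chebyshev

theorem nat_mul_sinh_le_sinh_nat_mul (n : ℕ) {u : ℝ} (hu : 0 ≤ u) :
    n * sinh u ≤ sinh (n * u) := by
  induction n with
  | zero => simp
  | succ n ih =>
    have hnu : 0 ≤ sinh (n * u) := sinh_nonneg_iff.mpr (by positivity)
    have hsu : 0 ≤ sinh u := sinh_nonneg_iff.mpr hu
    calc ((n + 1 : ℕ) : ℝ) * sinh u = n * sinh u + sinh u := by push_cast; ring
      _ ≤ sinh (n * u) * cosh u + cosh (n * u) * sinh u :=
        add_le_add (ih.trans (le_mul_of_one_le_right hnu (one_le_cosh u)))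
          (le_mul_of_one_le_left hsu (one_le_cosh _))
      _ = sinh (((n + 1 : ℕ) : ℝ) * u) := by rw [← sinh_add]; push_cast; ring_nf

theorem cosh_sub_one_eq_two_mul_sinh_half_sq (u : ℝ) : cosh u - 1 = 2 * sinh (u / 2) ^ 2 := by
  have h := cosh_two_mul (u / 2)
  rw [mul_div_cancel₀ u two_ne_zero, cosh_sq] at h
  linarith

theorem one_add_sq_mul_le_eval_T_real (n : ℕ) {x : ℝ} (hx : 1 ≤ x) :
    1 + n ^ 2 * (x - 1) ≤ (T ℝ n).eval x := by
  obtain ⟨s, hs, rfl⟩ : ∃ s, 0 ≤ s ∧ cosh s = x :=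
    ⟨arcosh x, arcosh_nonneg hx, cosh_arcosh hx⟩
  have hs2 : 0 ≤ s / 2 := by positivity
  have hsinh := nat_mul_sinh_le_sinh_nat_mul n hs2
  have hsinh_nonneg : 0 ≤ n * sinh (s / 2) := by
    have := sinh_nonneg_iff.mpr hs2
    positivity
  calc 1 + n ^ 2 * (cosh s - 1) = 1 + 2 * (n * sinh (s / 2)) ^ 2 := by
        rw [cosh_sub_one_eq_two_mul_sinh_half_sq]; ring
    _ ≤ 1 + 2 * sinh (n * (s / 2)) ^ 2 := by gcongr
    _ = (T ℝ n).eval (cosh s) := by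
        rw [T_real_cosh, ← mul_div_assoc, ← cosh_sub_one_eq_two_mul_sinh_half_sq]; push_cast; ring

/-- For `W ≥ 1` and `G(t) = T_d(2t/W + 1)`: `G(t) ∈ [-1,1]` on `[-W, 0]`, and if
`d ≥ √W` then `G(t) ≥ 2` for all `t ≥ 1`. -/
theorem chebyshev_shifted_properties (W : ℝ) (hW : 1 ≤ W) (d : ℕ)
    (G : ℝ → ℝ) (hG : ∀ t, G t = (Polynomial.Chebyshev.T ℝ d).eval (2 * t / W + 1)) :
    (∀ t, -W ≤ t → t ≤ 0 → G t ∈ Set.Icc (-1 : ℝ) 1) ∧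
      (Real.sqrt W ≤ (d : ℝ) → ∀ t, 1 ≤ t → 2 ≤ G t) := by
  have hW0 : 0 < W := by linarith
  refine ⟨fun t ht₁ ht₂ => ?_, fun hd t ht => ?_⟩
  · have hlo : -2 ≤ 2 * t / W := by rw [le_div_iff₀ hW0]; linarith
    have hhi : 2 * t / W ≤ 0 := div_nonpos_of_nonpos_of_nonneg (by linarith) hW0.le
    rw [hG t]
    exact eval_T_real_mem_Icc d ⟨by linarith, by linarith⟩
  · have hdW : W ≤ d ^ 2 := (sqrt_le_left (Nat.cast_nonneg d)).mp hd
    have hgrowth : 2 ≤ d ^ 2 * (2 * t / W) := by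
      rw [mul_div_assoc', le_div_iff₀ hW0]; nlinarith
    have hT := one_add_sq_mul_le_eval_T_real d (x := 2 * t / W + 1)
      (le_add_of_nonneg_left (div_nonneg (by linarith) hW0.le))
    rw [hG t]
    linarith
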